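/- arXiv:2110.08053 — 4 statements merged into one kernel-verified Lean document; each statement's English description precedes it below -/
import Mathlib

section
/- For a natural number n with 1 ≤ n < r, the n-th moment of the PME density equals m_n = n! * (r/(r-n)) * ((r-1)/r)^n, i.e., ∫_0^∞ t^n * g_r(t) dt = n! * r/(r-n) * ((r-1)/r)^n. -/
open MeasureTheory Set Real

noncomputable def paretoDensity (r x : ℝ) : ℝ :=
  if (r - 1) / r ≤ x then r * ((r - 1) / r) ^ r * x ^ (-(r + 1)) else 0

noncomputable def pme (r t : ℝ) : ℝ :=
  ∫ y in Ici ((r - 1) / r), paretoDensity r y * (1 / y) * Real.exp (-t / y)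

lemma pme_inner_integrable (n : ℕ) {y : ℝ} (hy : 0 < y) :
    IntegrableOn (fun t : ℝ => t ^ n * Real.exp (-t / y)) (Ioi 0) := by
  have h := integrableOn_rpow_mul_exp_neg_mul_rpow (p := 1) (s := (n : ℝ)) (b := 1 / y)
    (by linarith [Nat.cast_nonneg (α := ℝ) n]) one_pos (by positivity)
  refine h.congr_fun (fun x hx => ?_) measurableSet_Ioi
  dsimp only
  rw [Real.rpow_one, Real.rpow_natCast, show -(1 / y) * x = -x / y by ring]

lemma pme_inner_integral (n : ℕ) {y : ℝ} (hy : 0 < y) :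
    ∫ t in Ioi (0 : ℝ), t ^ n * Real.exp (-t / y) = (n.factorial : ℝ) * y ^ (n + 1) := by
  have h := Real.integral_rpow_mul_exp_neg_mul_Ioi (a := (n : ℝ) + 1) (r := 1 / y)
    (by positivity) (by positivity)
  rw [show ((n : ℝ) + 1) - 1 = (n : ℝ) by ring] at h
  simp_rw [Real.rpow_natCast, show ∀ t : ℝ, -(1 / y * t) = -t / y from fun t => by ring] at h
  rw [h, one_div_one_div]
  rw [show ((n : ℝ) + 1) = ((n + 1 : ℕ) : ℝ) by push_cast; ring, Real.rpow_natCast]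
  rw [show ((n + 1 : ℕ) : ℝ) = (n : ℝ) + 1 by push_cast; ring, Real.Gamma_nat_eq_factorial]
  ring

theorem pme_moments (r : ℝ) (hr : 1 < r) (n : ℕ) (hn1 : 1 ≤ n) (hnr : (n : ℝ) < r) :
    (∫ t in Ioi (0 : ℝ), t ^ n * pme r t) =
      (n.factorial : ℝ) * (r / (r - n)) * ((r - 1) / r) ^ n := by
  have hr0 : 0 < r := lt_trans one_pos hr
  set c : ℝ := (r - 1) / r with hc_def
  have hc : 0 < c := div_pos (by linarith) hr0
  set K : ℝ := r * c ^ r with hK_def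
  have hK : 0 < K := mul_pos hr0 (rpow_pos_of_pos hc r)
  set F : ℝ → ℝ → ℝ :=
    fun y t => (K * y ^ (-(r + 1)) * (1 / y)) * (t ^ n * Real.exp (-t / y)) with hF
  have hexp : (n : ℝ) - r - 1 < -1 := by linarith
  have hrn : r - (n : ℝ) ≠ 0 := by intro h; linarith [sub_eq_zero.mp h]
  -- pareto density on Ici c
  have hpd : ∀ y ∈ Ici c, paretoDensity r y = K * y ^ (-(r + 1)) := by
    intro y hy
    have hy' : (r - 1) / r ≤ y := hc_def ▸ hy
    rw [paretoDensity, if_pos hy', ← hc_def, hK_def]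
  -- Step A : rewrite integrand
  have hA : ∀ t : ℝ, t ^ n * pme r t = ∫ y in Ici c, F y t := by
    intro t
    rw [pme, ← hc_def, ← integral_const_mul]
    refine setIntegral_congr_fun measurableSet_Ici fun y hy => ?_
    rw [hpd y hy, hF]
    ring
  -- value of the inner t-integral
  have hC : ∀ y : ℝ, 0 < y → (∫ t in Ioi (0 : ℝ), F y t)
      = (K * y ^ (-(r + 1)) * (1 / y)) * ((n.factorial : ℝ) * y ^ (n + 1)) := by
    intro y hy
    simp only [hF]
    rw [integral_const_mul, pme_inner_integral n hy]
  have hsimp : ∀ y : ℝ, 0 < y →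
      (K * y ^ (-(r + 1)) * (1 / y)) * ((n.factorial : ℝ) * y ^ (n + 1))
        = (K * (n.factorial : ℝ)) * y ^ ((n : ℝ) - r - 1) := by
    intro y hy
    have h1 : y ^ (-(r + 1)) * y ^ (-1 : ℝ) * y ^ (((n + 1 : ℕ) : ℝ))
        = y ^ ((n : ℝ) - r - 1) := by
      rw [← Real.rpow_add hy, ← Real.rpow_add hy]
      congr 1
      push_cast
      ring
    calc (K * y ^ (-(r + 1)) * (1 / y)) * ((n.factorial : ℝ) * y ^ (n + 1))
        = (K * (n.factorial : ℝ))
            * (y ^ (-(r + 1)) * y ^ (-1 : ℝ) * y ^ (((n + 1 : ℕ) : ℝ))) := by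
          rw [Real.rpow_neg_one, Real.rpow_natCast, one_div]; ring
      _ = (K * (n.factorial : ℝ)) * y ^ ((n : ℝ) - r - 1) := by rw [h1]
  -- measurability
  have hFm : AEStronglyMeasurable (fun p : ℝ × ℝ => F p.1 p.2)
      ((volume.restrict (Ici c)).prod (volume.restrict (Ioi 0))) := by
    apply Measurable.aestronglyMeasurable
    simp only [hF]
    apply Measurable.mul
    · exact ((measurable_const.mul (measurable_fst.pow_const _)).mul
        (measurable_const.div measurable_fst))
    · exact (measurable_snd.pow_const _).mul
        ((measurable_snd.neg.div measurable_fst).exp)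
  -- sections integrable
  have hsec : ∀ y ∈ Ici c, Integrable (fun t => F y t) (volume.restrict (Ioi 0)) := by
    intro y hy
    have hy0 : 0 < y := lt_of_lt_of_le hc hy
    simp only [hF]
    exact (pme_inner_integrable n hy0).const_mul _
  -- the norm integral as a function of y
  have hnorm : ∀ y ∈ Ici c, (∫ t in Ioi (0 : ℝ), ‖F y t‖)
      = (K * (n.factorial : ℝ)) * y ^ ((n : ℝ) - r - 1) := by
    intro y hy
    have hy0 : 0 < y := lt_of_lt_of_le hc hy
    have h1 : ∀ t ∈ Ioi (0 : ℝ), ‖F y t‖ = F y t := by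
      intro t ht
      have ht0 : 0 < t := ht
      apply Real.norm_of_nonneg
      simp only [hF]
      positivity
    rw [setIntegral_congr_fun measurableSet_Ioi h1, hC y hy0, hsimp y hy0]
  -- integrability of the y-majorant
  have hIo : IntegrableOn (fun y : ℝ => (K * (n.factorial : ℝ)) * y ^ ((n : ℝ) - r - 1))
      (Ici c) := by
    rw [integrableOn_Ici_iff_integrableOn_Ioi]
    exact (integrableOn_Ioi_rpow_of_lt hexp hc).const_mul _
  have hnormInt : Integrable (fun y => ∫ t in Ioi (0 : ℝ), ‖F y t‖)
      (volume.restrict (Ici c)) := by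
    refine hIo.congr ?_
    filter_upwards [ae_restrict_mem measurableSet_Ici] with y hy
    exact (hnorm y hy).symm
  -- product integrability
  have hint : Integrable (fun p : ℝ × ℝ => F p.1 p.2)
      ((volume.restrict (Ici c)).prod (volume.restrict (Ioi 0))) := by
    rw [MeasureTheory.integrable_prod_iff hFm]
    constructor
    · filter_upwards [ae_restrict_mem measurableSet_Ici] with y hy
      exact hsec y hy
    · exact hnormInt
  -- swap
  have hswap : (∫ t in Ioi (0 : ℝ), ∫ y in Ici c, F y t)
      = ∫ y in Ici c, ∫ t in Ioi (0 : ℝ), F y t :=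
    (MeasureTheory.integral_integral_swap hint).symm
  simp_rw [hA]
  rw [hswap]
  have hB : (∫ y in Ici c, ∫ t in Ioi (0 : ℝ), F y t)
      = ∫ y in Ici c, (K * (n.factorial : ℝ)) * y ^ ((n : ℝ) - r - 1) := by
    refine setIntegral_congr_fun measurableSet_Ici fun y hy => ?_
    have hy0 : 0 < y := lt_of_lt_of_le hc hy
    rw [hC y hy0, hsimp y hy0]
  rw [hB, MeasureTheory.integral_Ici_eq_integral_Ioi, integral_const_mul,
    integral_Ioi_rpow_of_lt hexp hc]
  rw [show (n : ℝ) - r - 1 + 1 = (n : ℝ) - r by ring]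
  have h2 : c ^ r * c ^ ((n : ℝ) - r) = c ^ n := by
    rw [← Real.rpow_add hc, ← Real.rpow_natCast c n]
    congr 1
    ring
  rw [hK_def, ← h2]
  have hrn' : (n : ℝ) - r ≠ 0 := by intro h; linarith [sub_eq_zero.mp h]
  clear_value F K c
  field_simp [hrn, hrn']
  ring
end

section
/- For a natural number n ≥ r (with r > 1 real), the n-th moment of the PME density is infinite: ∫_0^∞ t^n * g_r(t) dt = ∞. -/
open MeasureTheory Set Real

lemma aux_rpow_mul (r y : ℝ) (hy0 : 0 < y) :
    y ^ (-(r + 1)) * (1 / y) = y ^ (-(r + 2)) := by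
  rw [one_div, ← Real.rpow_neg_one y, ← Real.rpow_add hy0]
  congr 1; ring

lemma aux_contOn (r t c : ℝ) (hc : 0 < c) :
    ContinuousOn (fun y : ℝ => r * ((r - 1) / r) ^ r * y ^ (-(r + 1)) * (1 / y)
      * Real.exp (-t / y)) (Ici c) := by
  have hne : ∀ y ∈ Ici c, y ≠ 0 := fun y hy => (lt_of_lt_of_le hc hy).ne'
  intro y hy
  have h1 : ContinuousAt (fun y : ℝ => y ^ (-(r + 1))) y :=
    Real.continuousAt_rpow_const y _ (Or.inl (hne y hy))
  have h2 : ContinuousAt (fun y : ℝ => (1:ℝ) / y) y :=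
    continuousAt_const.div continuousAt_id (hne y hy)
  have h3 : ContinuousAt (fun y : ℝ => Real.exp (-t / y)) y :=
    (continuousAt_const.div continuousAt_id (hne y hy)).rexp
  exact (((continuousAt_const.mul h1).mul h2).mul h3).continuousWithinAt

-- auxiliary: integrability of the explicit integrand on Ici c
lemma aux_integrableOn (r t : ℝ) (hr : 1 < r) (ht : 0 ≤ t) {c : ℝ}
    (hc : 0 < c) :
    IntegrableOn (fun y : ℝ => r * ((r - 1) / r) ^ r * y ^ (-(r + 1)) * (1 / y)
      * Real.exp (-t / y)) (Ici c) := by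
  have hC0 : (0:ℝ) ≤ r * ((r - 1) / r) ^ r :=
    mul_nonneg (by linarith) (rpow_nonneg (div_nonneg (by linarith) (by linarith)) r)
  have hg : IntegrableOn (fun y : ℝ => r * ((r - 1) / r) ^ r * y ^ (-(r + 2)))
      (Ici c) := by
    rw [integrableOn_Ici_iff_integrableOn_Ioi]
    exact (integrableOn_Ioi_rpow_of_lt (by linarith) hc).const_mul _
  apply hg.mono' ((aux_contOn r t c hc).aestronglyMeasurable measurableSet_Ici)
  filter_upwards [ae_restrict_mem measurableSet_Ici] with y hy
  have hy0 : 0 < y := lt_of_lt_of_le hc hy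
  have h1 : Real.exp (-t / y) ≤ 1 :=
    Real.exp_le_one_iff.mpr (div_nonpos_of_nonpos_of_nonneg (by linarith) hy0.le)
  have h2 : (0:ℝ) ≤ r * ((r - 1) / r) ^ r * y ^ (-(r + 1)) * (1 / y) :=
    mul_nonneg (mul_nonneg hC0 (rpow_nonneg hy0.le _)) (by positivity)
  rw [Real.norm_eq_abs, abs_of_nonneg (mul_nonneg h2 (Real.exp_nonneg _))]
  calc r * ((r - 1) / r) ^ r * y ^ (-(r + 1)) * (1 / y) * Real.exp (-t / y)
      ≤ r * ((r - 1) / r) ^ r * y ^ (-(r + 1)) * (1 / y) * 1 :=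
        mul_le_mul_of_nonneg_left h1 h2
    _ = r * ((r - 1) / r) ^ r * y ^ (-(r + 2)) := by
        rw [mul_one, mul_assoc, aux_rpow_mul r y hy0]

lemma aux_pme_lower (r t : ℝ) (hr : 1 < r) (ht : 1 ≤ t) :
    r * ((r - 1) / r) ^ r * Real.exp (-1) * (t ^ (-(r + 1)) / (r + 1))
      ≤ pme r t := by
  set a : ℝ := (r - 1) / r with ha
  have ha0 : 0 < a := div_pos (by linarith) (by linarith)
  have ha1 : a < 1 := by rw [ha, div_lt_one (by linarith)]; linarith
  have hC0 : (0:ℝ) ≤ r * a ^ r :=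
    mul_nonneg (by linarith) (rpow_nonneg ha0.le r)
  have ht0 : 0 < t := by linarith
  have heq : pme r t
      = ∫ y in Ici a, r * a ^ r * y ^ (-(r + 1)) * (1 / y) * Real.exp (-t / y) := by
    apply setIntegral_congr_fun measurableSet_Ici
    intro y hy
    simp only [paretoDensity, if_pos (mem_Ici.mp hy), ha]
  rw [heq]
  have hint : IntegrableOn
      (fun y : ℝ => r * a ^ r * y ^ (-(r + 1)) * (1 / y) * Real.exp (-t / y))
      (Ici a) := aux_integrableOn r t hr (by linarith) ha0
  have hintt : IntegrableOn
      (fun y : ℝ => r * a ^ r * y ^ (-(r + 1)) * (1 / y) * Real.exp (-t / y))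
      (Ici t) := aux_integrableOn r t hr (by linarith) ht0
  have step1 : (∫ y in Ici t, r * a ^ r * y ^ (-(r + 1)) * (1 / y) * Real.exp (-t / y))
      ≤ ∫ y in Ici a, r * a ^ r * y ^ (-(r + 1)) * (1 / y) * Real.exp (-t / y) := by
    apply setIntegral_mono_set hint
    · filter_upwards [ae_restrict_mem measurableSet_Ici] with y hy
      have hy0 : 0 < y := lt_of_lt_of_le ha0 hy
      exact mul_nonneg (mul_nonneg (mul_nonneg hC0 (rpow_nonneg hy0.le _))
        (by positivity)) (Real.exp_nonneg _)
    · exact HasSubset.Subset.eventuallyLE (Ici_subset_Ici.mpr (by linarith))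
  have hintt2 : IntegrableOn (fun y : ℝ => r * a ^ r * Real.exp (-1) * y ^ (-(r + 2)))
      (Ici t) := by
    rw [integrableOn_Ici_iff_integrableOn_Ioi]
    exact (integrableOn_Ioi_rpow_of_lt (by linarith) ht0).const_mul _
  have step2 : (∫ y in Ici t, r * a ^ r * Real.exp (-1) * y ^ (-(r + 2)))
      ≤ ∫ y in Ici t, r * a ^ r * y ^ (-(r + 1)) * (1 / y) * Real.exp (-t / y) := by
    apply setIntegral_mono_on hintt2 hintt measurableSet_Ici
    intro y hy
    have hyt : t ≤ y := mem_Ici.mp hy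
    have hy0 : 0 < y := lt_of_lt_of_le ht0 hyt
    have hexp : Real.exp (-1) ≤ Real.exp (-t / y) := by
      apply Real.exp_le_exp.mpr
      rw [neg_div, neg_le_neg_iff, div_le_one hy0]
      exact hyt
    calc r * a ^ r * Real.exp (-1) * y ^ (-(r + 2))
        = r * a ^ r * y ^ (-(r + 1)) * (1 / y) * Real.exp (-1) := by
          rw [← aux_rpow_mul r y hy0]; ring
      _ ≤ r * a ^ r * y ^ (-(r + 1)) * (1 / y) * Real.exp (-t / y) := by
          apply mul_le_mul_of_nonneg_left hexp
          exact mul_nonneg (mul_nonneg hC0 (rpow_nonneg hy0.le _)) (by positivity)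
  have step3 : (∫ y in Ici t, r * a ^ r * Real.exp (-1) * y ^ (-(r + 2)))
      = r * a ^ r * Real.exp (-1) * (t ^ (-(r + 1)) / (r + 1)) := by
    rw [MeasureTheory.integral_Ici_eq_integral_Ioi,
      MeasureTheory.integral_const_mul, integral_Ioi_rpow_of_lt (by linarith) ht0]
    have h : -(r + 2) + 1 = -(r + 1) := by ring
    rw [h, neg_div_neg_eq]
  calc r * a ^ r * Real.exp (-1) * (t ^ (-(r + 1)) / (r + 1))
      = ∫ y in Ici t, r * a ^ r * Real.exp (-1) * y ^ (-(r + 2)) := step3.symm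
    _ ≤ ∫ y in Ici t, r * a ^ r * y ^ (-(r + 1)) * (1 / y) * Real.exp (-t / y) := step2
    _ ≤ ∫ y in Ici a, r * a ^ r * y ^ (-(r + 1)) * (1 / y) * Real.exp (-t / y) := step1

theorem pme_moments_infinite (r : ℝ) (hr : 1 < r) (n : ℕ) (hn1 : 1 ≤ n)
    (hnr : r ≤ (n : ℝ)) :
    (∫⁻ t in Ioi (0 : ℝ), ENNReal.ofReal (t ^ n * pme r t)) = ⊤ := by
  set a : ℝ := (r - 1) / r with ha
  have ha0 : 0 < a := div_pos (by linarith) (by linarith)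
  set K : ℝ := r * a ^ r * Real.exp (-1) / (r + 1) with hK
  have hK0 : 0 < K := by
    apply div_pos _ (by linarith)
    exact mul_pos (mul_pos (by linarith) (rpow_pos_of_pos ha0 r)) (Real.exp_pos _)
  set s : ℝ := (n : ℝ) - (r + 1) with hs
  have hs1 : (-1 : ℝ) ≤ s := by rw [hs]; linarith
  rw [eq_top_iff]
  calc (⊤ : ENNReal) = ∫⁻ t in Ioi (1 : ℝ), ENNReal.ofReal (K * t ^ s) := by
        symm
        by_contra h
        have hint : IntegrableOn (fun t : ℝ => K * t ^ s) (Ioi 1) := by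
          constructor
          · apply ContinuousOn.aestronglyMeasurable _ measurableSet_Ioi
            apply continuousOn_const.mul
            intro t htm
            exact (Real.continuousAt_rpow_const t _
              (Or.inl (lt_trans zero_lt_one htm).ne')).continuousWithinAt
          · rw [hasFiniteIntegral_iff_ofReal]
            · exact lt_top_iff_ne_top.mpr h
            · filter_upwards [ae_restrict_mem measurableSet_Ioi] with t htm
              have h0 : (0:ℝ) < t := lt_trans zero_lt_one htm
              exact mul_nonneg hK0.le (rpow_nonneg h0.le _)
        have h2 : IntegrableOn (fun t : ℝ => t ^ s) (Ioi (1:ℝ)) := by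
          have h3 := hint.const_mul K⁻¹
          simpa [← mul_assoc, inv_mul_cancel₀ hK0.ne', IntegrableOn] using h3
        rw [integrableOn_Ioi_rpow_iff zero_lt_one] at h2
        linarith
    _ ≤ ∫⁻ t in Ioi (1 : ℝ), ENNReal.ofReal (t ^ n * pme r t) := by
        apply lintegral_mono_ae
        filter_upwards [ae_restrict_mem measurableSet_Ioi] with t htm
        have ht1 : (1:ℝ) ≤ t := (le_of_lt htm)
        have ht0 : (0:ℝ) < t := lt_of_lt_of_le zero_lt_one ht1
        apply ENNReal.ofReal_le_ofReal
        have hlow := aux_pme_lower r t hr ht1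
        have hkey : K * t ^ s = t ^ n * (r * a ^ r * Real.exp (-1) * (t ^ (-(r + 1)) / (r + 1))) := by
          rw [hs, sub_eq_add_neg, Real.rpow_add ht0, Real.rpow_natCast]
          rw [hK]
          ring
        rw [hkey]
        apply mul_le_mul_of_nonneg_left hlow (by positivity)
    _ ≤ ∫⁻ t in Ioi (0 : ℝ), ENNReal.ofReal (t ^ n * pme r t) := by
        apply lintegral_mono_set
        exact Ioi_subset_Ioi zero_le_one
end

section
/- The Laplace transform of the PME density satisfies ĝ_r(s) = ∫_0^∞ e^{-st} g_r(t) dt = r * ((r-1)/r)^r * ∫_0^{r/(r-1)} x^r / (s + x) dx for all s > 0 and r > 1. -/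
open MeasureTheory Set Real

lemma integral_exp_neg_mul_Ioi_zero {b : ℝ} (hb : 0 < b) :
    ∫ t in Ioi (0:ℝ), Real.exp (-(b * t)) = b⁻¹ := by
  have h := integral_comp_mul_left_Ioi (fun u => Real.exp (-u)) 0 hb
  rw [mul_zero, integral_exp_neg_Ioi, neg_zero, Real.exp_zero, smul_eq_mul, mul_one] at h
  exact h

lemma inv_image_Ici {a : ℝ} (ha : 0 < a) :
    (fun y : ℝ => y⁻¹) '' Ici a = Ioc 0 a⁻¹ := by
  ext x
  constructor
  · rintro ⟨y, hy, rfl⟩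
    have hy0 : 0 < y := lt_of_lt_of_le ha hy
    exact ⟨inv_pos.mpr hy0, inv_anti₀ ha hy⟩
  · rintro ⟨hx0, hx⟩
    refine ⟨x⁻¹, ?_, inv_inv x⟩
    rw [mem_Ici, ← inv_inv a]
    exact inv_anti₀ hx0 hx

lemma inv_injOn_Ici {a : ℝ} (ha : 0 < a) : InjOn (fun y : ℝ => y⁻¹) (Ici a) := by
  intro x hx y hy h
  have hx0 : x ≠ 0 := (lt_of_lt_of_le ha hx).ne'
  have hy0 : y ≠ 0 := (lt_of_lt_of_le ha hy).ne'
  field_simp at h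
  exact h.symm

lemma paretoDensity_measurable (r : ℝ) : Measurable (paretoDensity r) := by
  unfold paretoDensity
  apply Measurable.ite (measurableSet_le measurable_const measurable_id)
  · measurability
  · exact measurable_const

lemma pme_kernel_measurable (r s : ℝ) :
    Measurable (fun p : ℝ × ℝ =>
      Real.exp (-(s * p.1)) * (paretoDensity r p.2 * (1 / p.2) * Real.exp (-p.1 / p.2))) := by
  have h1 : Measurable fun p : ℝ × ℝ => paretoDensity r p.2 :=
    (paretoDensity_measurable r).comp measurable_snd
  measurability

lemma pme_kernel_integrable (r : ℝ) (hr : 1 < r) (s : ℝ) (hs : 0 < s) :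
    Integrable (Function.uncurry fun t y : ℝ =>
        Real.exp (-(s * t)) * (paretoDensity r y * (1 / y) * Real.exp (-t / y)))
      ((volume.restrict (Ioi 0)).prod (volume.restrict (Ici ((r - 1) / r)))) := by
  have hr0 : (0 : ℝ) < r := by linarith
  set a : ℝ := (r - 1) / r with ha_def
  have ha : 0 < a := div_pos (by linarith) hr0
  set C : ℝ := r * a ^ r with hC_def
  have hC : 0 < C := mul_pos hr0 (rpow_pos_of_pos ha r)
  have hbInt : Integrable (fun p : ℝ × ℝ =>
      Real.exp (-(s * p.1)) * (C / a * p.2 ^ (-(r + 1))))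
      ((volume.restrict (Ioi 0)).prod (volume.restrict (Ici a))) := by
    have h1 : Integrable (fun t : ℝ => Real.exp (-(s * t))) (volume.restrict (Ioi 0)) := by
      have := exp_neg_integrableOn_Ioi 0 hs
      simpa [neg_mul, IntegrableOn] using this
    have h2 : Integrable (fun y : ℝ => C / a * y ^ (-(r + 1))) (volume.restrict (Ici a)) := by
      have : IntegrableOn (fun y : ℝ => y ^ (-(r + 1))) (Ioi a) :=
        integrableOn_Ioi_rpow_of_lt (by linarith) ha
      exact ((integrableOn_Ici_iff_integrableOn_Ioi (hb := enorm_ne_top)).mpr this).const_mul _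
    exact h1.mul_prod h2
  refine hbInt.mono' ?_ ?_
  · exact (pme_kernel_measurable r s).aestronglyMeasurable
  · rw [Measure.prod_restrict, ae_restrict_iff' (measurableSet_Ioi.prod measurableSet_Ici)]
    filter_upwards with p hp
    obtain ⟨ht, hy⟩ := hp
    rw [mem_Ioi] at ht; rw [mem_Ici] at hy
    have hy0 : 0 < p.2 := lt_of_lt_of_le ha hy
    have hpd : paretoDensity r p.2 = C * p.2 ^ (-(r + 1)) := if_pos hy
    have hrpow : (0 : ℝ) < p.2 ^ (-(r + 1)) := rpow_pos_of_pos hy0 _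
    rw [Function.uncurry, Real.norm_eq_abs, hpd, abs_of_nonneg (by positivity)]
    have hrhs : C / a * p.2 ^ (-(r + 1)) = C * p.2 ^ (-(r + 1)) * (1 / a) * 1 := by
      ring
    rw [hrhs]
    gcongr
    · rw [Real.exp_le_one_iff, neg_div]
      simp only [neg_nonpos]
      positivity


theorem pme_laplace_transform (r : ℝ) (hr : 1 < r) (s : ℝ) (hs : 0 < s) :
    (∫ t in Ioi (0 : ℝ), Real.exp (-(s * t)) * pme r t) =
      r * ((r - 1) / r) ^ r * ∫ x in (0 : ℝ)..(r / (r - 1)), x ^ r / (s + x) := by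
  have hr0 : (0 : ℝ) < r := by linarith
  set a : ℝ := (r - 1) / r with ha_def
  have ha : 0 < a := div_pos (by linarith) hr0
  set C : ℝ := r * a ^ r with hC_def
  have hC : 0 < C := mul_pos hr0 (rpow_pos_of_pos ha r)
  have hainv : a⁻¹ = r / (r - 1) := by rw [ha_def, inv_div]
  -- Step 1 : push the exponential inside
  have step1 : (∫ t in Ioi (0 : ℝ), Real.exp (-(s * t)) * pme r t)
      = ∫ t in Ioi (0 : ℝ), ∫ y in Ici a,
          Real.exp (-(s * t)) * (paretoDensity r y * (1 / y) * Real.exp (-t / y)) := by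
    refine setIntegral_congr_fun measurableSet_Ioi fun t ht => ?_
    rw [pme, ← integral_const_mul]
  have hint : Integrable (Function.uncurry fun t y : ℝ =>
        Real.exp (-(s * t)) * (paretoDensity r y * (1 / y) * Real.exp (-t / y)))
      ((volume.restrict (Ioi 0)).prod (volume.restrict (Ici a))) :=
    pme_kernel_integrable r hr s hs
  have step2 := integral_integral_swap hint
  -- Step 3 : evaluate the inner integral over t
  have step3 : (∫ y in Ici a, ∫ t in Ioi (0 : ℝ),
        Real.exp (-(s * t)) * (paretoDensity r y * (1 / y) * Real.exp (-t / y)))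
      = ∫ y in Ici a, C * (y ^ (-(r + 1)) * (1 / y) * (s + 1 / y)⁻¹) := by
    refine setIntegral_congr_fun measurableSet_Ici fun y hy => ?_
    rw [mem_Ici] at hy
    have hy0 : 0 < y := lt_of_lt_of_le ha hy
    have hb : 0 < s + 1 / y := by positivity
    have hpd : paretoDensity r y = C * y ^ (-(r + 1)) := if_pos hy
    have heq : ∀ t : ℝ, Real.exp (-(s * t)) * (paretoDensity r y * (1 / y) * Real.exp (-t / y))
        = C * (y ^ (-(r + 1)) * (1 / y)) * Real.exp (-((s + 1 / y) * t)) := by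
      intro t
      rw [hpd, show Real.exp (-(s * t)) * (C * y ^ (-(r + 1)) * (1 / y) * Real.exp (-t / y))
          = C * (y ^ (-(r + 1)) * (1 / y)) * (Real.exp (-(s * t)) * Real.exp (-t / y)) from by
        ring, ← Real.exp_add]
      congr 1
      field_simp
      ring
    simp_rw [heq]
    rw [integral_const_mul, integral_exp_neg_mul_Ioi_zero hb]
    ring
  -- Step 4 : change of variables x = 1/y in the right-hand side
  have hcv : (∫ x in Ioc (0 : ℝ) a⁻¹, x ^ r / (s + x))
      = ∫ y in Ici a, y ^ (-(r + 1)) * (1 / y) * (s + 1 / y)⁻¹ := by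
    rw [← inv_image_Ici ha,
      integral_image_eq_integral_abs_deriv_smul measurableSet_Ici
        (fun y hy => (hasDerivAt_inv (lt_of_lt_of_le ha hy).ne').hasDerivWithinAt)
        (inv_injOn_Ici ha)]
    refine setIntegral_congr_fun measurableSet_Ici fun y hy => ?_
    rw [mem_Ici] at hy
    have hy0 : 0 < y := lt_of_lt_of_le ha hy
    have hsy : (0:ℝ) < s + y⁻¹ := by positivity
    have hyr : (0:ℝ) < y ^ r := rpow_pos_of_pos hy0 r
    rw [smul_eq_mul, abs_neg, abs_of_nonneg (by positivity), inv_rpow hy0.le,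
      rpow_neg hy0.le, rpow_add hy0, rpow_one, pow_two]
    rw [div_eq_mul_inv, mul_inv, mul_inv]
    ring
  have hIoc : (∫ x in (0:ℝ)..(r / (r - 1)), x ^ r / (s + x))
      = ∫ x in Ioc (0 : ℝ) a⁻¹, x ^ r / (s + x) := by
    rw [← hainv, intervalIntegral.integral_of_le (by positivity)]
  rw [step1, step2, step3, hIoc, hcv, integral_const_mul]
end

section
/- If a nonnegative random variable X has density (with respect to Lebesgue measure on [0,∞)) given by the PME g_r with r > 1, then for every natural number n ≥ r the expectation E[X^n] is infinite; in particular g_r is a heavy/long-tailed density in the sense that some moment is infinite. -/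
open MeasureTheory Set Real

noncomputable def pmeK (r : ℝ) : ℝ :=
  r * ((r - 1) / r) ^ r * Real.exp (-1) * 2 ^ (-(r + 2))

lemma pmeK_pos {r : ℝ} (hr : 1 < r) : 0 < pmeK r := by
  have hc : 0 < (r - 1) / r := div_pos (by linarith) (by linarith)
  exact mul_pos (mul_pos (mul_pos (by linarith) (rpow_pos_of_pos hc r))
    (exp_pos _)) (rpow_pos_of_pos two_pos _)

lemma pme_lower {r : ℝ} (hr : 1 < r) {t : ℝ} (ht : 1 ≤ t) :
    pmeK r * t ^ (-(r + 1)) ≤ pme r t := by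
  set c := (r - 1) / r with hc_def
  have hr0 : (0 : ℝ) < r := by linarith
  have hc0 : 0 < c := div_pos (by linarith) hr0
  have hc1 : c < 1 := (div_lt_one hr0).mpr (by linarith)
  have ht0 : 0 < t := lt_of_lt_of_le one_pos ht
  set F : ℝ → ℝ := fun y => paretoDensity r y * (1 / y) * Real.exp (-t / y) with hF_def
  have hFm : Measurable F := by
    have h1 : Measurable (paretoDensity r) := by
      unfold paretoDensity
      exact Measurable.ite measurableSet_Ici (by fun_prop) measurable_const
    exact (h1.mul (by fun_prop)).mul (by fun_prop)
  -- pointwise formula and bound on Ici c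
  have hpow : ∀ y : ℝ, 0 < y → y ^ (-(r + 1)) * (1 / y) = y ^ (-(r + 2)) := by
    intro y hy
    rw [one_div, ← Real.rpow_neg_one y, ← Real.rpow_add hy]
    congr 1
    ring
  have hpar : ∀ y : ℝ, c ≤ y → paretoDensity r y = r * c ^ r * y ^ (-(r + 1)) := by
    intro y hy'
    have hy'' : (r - 1) / r ≤ y := hy'
    simp only [paretoDensity, if_pos hy'', ← hc_def, if_pos hy']
  have hFeq : ∀ y : ℝ, c ≤ y → F y = r * c ^ r * y ^ (-(r + 2)) * Real.exp (-t / y) := by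
    intro y hy'
    have hy0 : 0 < y := lt_of_lt_of_le hc0 hy'
    simp only [hF_def]
    rw [hpar y hy', mul_assoc (r * c ^ r), hpow y hy0]
  have hFnn : ∀ y ∈ Ici c, 0 ≤ F y := by
    intro y hy
    have hy0 : 0 < y := lt_of_lt_of_le hc0 hy
    rw [hFeq y hy]
    have h1 : 0 ≤ y ^ (-(r + 2)) := rpow_nonneg hy0.le _
    have h2 : 0 ≤ c ^ r := rpow_nonneg hc0.le _
    positivity
  have hFint : IntegrableOn F (Ici c) := by
    have hgint : IntegrableOn (fun y : ℝ => r * c ^ r * y ^ (-(r + 2))) (Ici c) := by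
      rw [integrableOn_Ici_iff_integrableOn_Ioi]
      exact (integrableOn_Ioi_rpow_of_lt (by linarith) hc0).const_mul _
    refine hgint.integrable.mono' (hFm.aestronglyMeasurable) ?_
    filter_upwards [ae_restrict_mem measurableSet_Ici] with y hy
    have hy0 : 0 < y := lt_of_lt_of_le hc0 hy
    rw [Real.norm_eq_abs, abs_of_nonneg (hFnn y hy)]
    rw [hFeq y hy]
    have he : Real.exp (-t / y) ≤ 1 := by
      rw [exp_le_one_iff, neg_div]
      have : 0 ≤ t / y := by positivity
      linarith
    nlinarith [rpow_nonneg hy0.le (-(r + 2)), rpow_pos_of_pos hc0 r,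
      mul_nonneg (mul_nonneg hr0.le (rpow_pos_of_pos hc0 r).le) (rpow_nonneg hy0.le (-(r + 2)))]
  -- restrict the integral to Icc t (2t)
  have hsub : Icc t (2 * t) ⊆ Ici c := fun y hy =>
    le_trans (le_trans hc1.le ht) hy.1
  have step1 : ∫ y in Icc t (2 * t), F y ≤ pme r t := by
    refine setIntegral_mono_set hFint ?_ (HasSubset.Subset.eventuallyLE hsub)
    filter_upwards [ae_restrict_mem measurableSet_Ici] with y hy using hFnn y hy
  -- lower bound integrand on Icc t (2t) by a constant
  set κ : ℝ := r * c ^ r * (2 * t) ^ (-(r + 2)) * Real.exp (-1) with hκ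
  have step2 : ∫ y in Icc t (2 * t), κ ≤ ∫ y in Icc t (2 * t), F y := by
    refine setIntegral_mono_on (integrableOn_const measure_Icc_lt_top.ne)
      (hFint.mono_set hsub) measurableSet_Icc ?_
    intro y hy
    have hy0 : 0 < y := lt_of_lt_of_le ht0 hy.1
    have hyc : c ≤ y := hsub hy
    rw [hFeq y hyc, hκ]
    have h1 : (2 * t) ^ (-(r + 2)) ≤ y ^ (-(r + 2)) :=
      rpow_le_rpow_of_nonpos hy0 hy.2 (by linarith)
    have h2 : Real.exp (-1) ≤ Real.exp (-t / y) := by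
      rw [exp_le_exp]
      rw [neg_div, neg_le_neg_iff]
      exact (div_le_one hy0).mpr hy.1
    have hA : 0 ≤ r * c ^ r := mul_nonneg hr0.le (rpow_nonneg hc0.le r)
    calc r * c ^ r * (2 * t) ^ (-(r + 2)) * Real.exp (-1)
        ≤ r * c ^ r * y ^ (-(r + 2)) * Real.exp (-1) := by
          apply mul_le_mul_of_nonneg_right _ (exp_pos _).le
          exact mul_le_mul_of_nonneg_left h1 hA
      _ ≤ r * c ^ r * y ^ (-(r + 2)) * Real.exp (-t / y) := by
          apply mul_le_mul_of_nonneg_left h2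
          exact mul_nonneg hA (rpow_nonneg hy0.le _)
  have step3 : ∫ y in Icc t (2 * t), κ = t * κ := by
    rw [setIntegral_const, measureReal_def, Real.volume_Icc, smul_eq_mul]
    rw [ENNReal.toReal_ofReal (by linarith)]
    ring_nf
  have step4 : pmeK r * t ^ (-(r + 1)) = t * κ := by
    rw [hκ, pmeK, ← hc_def]
    rw [Real.mul_rpow (by norm_num) ht0.le]
    have h5 : t * t ^ (-(r + 2)) = t ^ (-(r + 1)) := by
      rw [show -(r + 1) = 1 + -(r + 2) by ring, Real.rpow_add ht0, Real.rpow_one]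
    rw [← h5]
    ring
  linarith [step1, step2, step3, step4]

theorem pme_heavy_tailed {Ω : Type*} [MeasurableSpace Ω] (P : Measure Ω)
    [IsProbabilityMeasure P] (X : Ω → ℝ) (hX : Measurable X) (r : ℝ) (hr : 1 < r)
    (hlaw : P.map X =
      (volume.restrict (Ioi (0 : ℝ))).withDensity (fun t => ENNReal.ofReal (pme r t))) :
    (∀ n : ℕ, r ≤ (n : ℝ) → (∫⁻ ω, ENNReal.ofReal (X ω ^ n) ∂P) = ⊤) ∧
    (∃ n : ℕ, (∫⁻ ω, ENNReal.ofReal (X ω ^ n) ∂P) = ⊤) := by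
  have hK := pmeK_pos hr
  have main : ∀ n : ℕ, r ≤ (n : ℝ) → (∫⁻ ω, ENNReal.ofReal (X ω ^ n) ∂P) = ⊤ := by
    intro n hn
    have hg : Measurable (fun t : ℝ => ENNReal.ofReal (t ^ n)) := by fun_prop
    have h1 : (∫⁻ ω, ENNReal.ofReal (X ω ^ n) ∂P)
        = ∫⁻ t, ENNReal.ofReal (t ^ n) ∂(P.map X) := (lintegral_map hg hX).symm
    rw [h1, hlaw]
    -- lower-bound density
    set h : ℝ → ENNReal :=
      (Ioi (1 : ℝ)).indicator (fun t => ENNReal.ofReal (pmeK r * t ^ (-(r + 1)))) with hh_def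
    have hhm : Measurable h := by
      refine Measurable.indicator ?_ measurableSet_Ioi
      fun_prop
    have hle : h ≤ fun t => ENNReal.ofReal (pme r t) := by
      intro t
      by_cases ht : t ∈ Ioi (1 : ℝ)
      · rw [hh_def, Set.indicator_of_mem ht]
        exact ENNReal.ofReal_le_ofReal (pme_lower hr (le_of_lt ht))
      · rw [hh_def, Set.indicator_of_notMem ht]; exact zero_le
    have hmono : (volume.restrict (Ioi (0 : ℝ))).withDensity h
        ≤ (volume.restrict (Ioi (0 : ℝ))).withDensity (fun t => ENNReal.ofReal (pme r t)) :=
      withDensity_mono (Filter.Eventually.of_forall hle)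
    refine top_le_iff.mp (le_trans ?_ (lintegral_mono' hmono le_rfl))
    rw [lintegral_withDensity_eq_lintegral_mul _ hhm hg]
    have hprod : (h * fun t => ENNReal.ofReal (t ^ n))
        = (Ioi (1 : ℝ)).indicator
            (fun t => ENNReal.ofReal (pmeK r * t ^ (-(r + 1))) * ENNReal.ofReal (t ^ n)) := by
      funext t
      by_cases ht : t ∈ Ioi (1 : ℝ)
      · simp [hh_def, Set.indicator_of_mem ht]
      · simp [hh_def, Set.indicator_of_notMem ht]
    rw [hprod, lintegral_indicator measurableSet_Ioi, Measure.restrict_restrict measurableSet_Ioi,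
      inter_eq_self_of_subset_left (Ioi_subset_Ioi zero_le_one)]
    -- lower bound by K * t⁻¹
    have hlb : ∀ t ∈ Ioi (1 : ℝ),
        ENNReal.ofReal (pmeK r * t ^ (-1 : ℝ))
          ≤ ENNReal.ofReal (pmeK r * t ^ (-(r + 1))) * ENNReal.ofReal (t ^ n) := by
      intro t ht
      have ht1 : (1 : ℝ) < t := ht
      have ht0 : (0 : ℝ) < t := by linarith
      rw [← ENNReal.ofReal_mul (mul_nonneg hK.le (rpow_nonneg ht0.le _))]
      apply ENNReal.ofReal_le_ofReal
      have : pmeK r * t ^ (-(r + 1)) * t ^ n = pmeK r * t ^ (-(r + 1) + n) := by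
        rw [mul_assoc, ← Real.rpow_natCast t n, ← Real.rpow_add ht0]
      rw [this]
      apply mul_le_mul_of_nonneg_left _ hK.le
      exact rpow_le_rpow_of_exponent_le ht1.le (by linarith)
    refine le_trans ?_ (setLIntegral_mono (by fun_prop) hlb)
    -- show the t⁻¹ integral is ⊤
    rw [top_le_iff]
    by_contra hne
    have hnn : 0 ≤ᵐ[volume.restrict (Ioi (1 : ℝ))] fun t : ℝ => pmeK r * t ^ (-1 : ℝ) := by
      filter_upwards [ae_restrict_mem measurableSet_Ioi] with t ht
      exact mul_nonneg hK.le (rpow_nonneg (by linarith [mem_Ioi.mp ht] : (0:ℝ) ≤ t) _)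
    have hint : Integrable (fun t : ℝ => pmeK r * t ^ (-1 : ℝ))
        (volume.restrict (Ioi (1 : ℝ))) :=
      (lintegral_ofReal_ne_top_iff_integrable ((by fun_prop : Measurable fun t : ℝ => pmeK r * t ^ (-1 : ℝ))).aestronglyMeasurable hnn).mp hne
    have hint2 : IntegrableOn (fun t : ℝ => t ^ (-1 : ℝ)) (Ioi (1 : ℝ)) := by
      have := hint.const_mul (pmeK r)⁻¹
      show Integrable (fun t : ℝ => t ^ (-1 : ℝ)) (volume.restrict (Ioi 1))
      simpa [← mul_assoc, inv_mul_cancel₀ hK.ne'] using this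
    have := (integrableOn_Ioi_rpow_iff one_pos).mp hint2
    linarith
  exact ⟨main, ⟨⌈r⌉₊, main _ (Nat.le_ceil r)⟩⟩
end
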